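/- Let R be a commutative ring, f₁, …, f_r ∈ R, and M an R-module. If the homology H_i(K•(f₁,…,f_r) ⊗_R M) vanishes for all i > 0 and H_0 = M/(f₁,…,f_r)M ≠ 0, then f₁, …, f_r need not be a regular sequence on M in general, but if R is Noetherian local, M is finitely generated, and the f_i lie in the maximal ideal, then f₁, …, f_r is an M-regular sequence. -/

import Mathlib

/-- The `p`-th term of the Koszul complex on `f : Fin r → R` with coefficients in `M`:
functions on the `(p)`-element subsets of `Fin r` with values in `M`
(i.e. `⋀^p (R^r) ⊗ M`). -/
abbrev koszulTerm (R : Type) [CommRing R] {r : ℕ} (f : Fin r → R)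
    (M : Type) [AddCommGroup M] [Module R M] (p : ℕ) : Type :=
  {s : Finset (Fin r) // s.card = p} → M

/-- The Koszul differential `K_{p+1} ⊗ M → K_p ⊗ M`,
`(d x) s = ∑_{i ∉ s} (-1)^{#{j ∈ s | j < i}} f i • x (insert i s)`. -/
noncomputable def koszulDiff (R : Type) [CommRing R] {r : ℕ} (f : Fin r → R)
    (M : Type) [AddCommGroup M] [Module R M] (p : ℕ) :
    koszulTerm R f M (p + 1) →ₗ[R] koszulTerm R f M p :=
  LinearMap.pi fun s => ∑ i ∈ s.1ᶜ.attach,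
    (((-1 : R) ^ (s.1.filter (fun j => j < i.1)).card) * f i.1) •
      LinearMap.proj (φ := fun _ : {s : Finset (Fin r) // s.card = p + 1} => M)
        ⟨insert i.1 s.1, by
          rw [Finset.card_insert_of_notMem (Finset.mem_compl.mp i.2), s.2]⟩

/-- The Koszul differential out of `K_i ⊗ M` (the zero map for `i = 0`). -/
noncomputable def koszulDiff' (R : Type) [CommRing R] {r : ℕ} (f : Fin r → R)
    (M : Type) [AddCommGroup M] [Module R M] : ∀ i : ℕ,
    koszulTerm R f M i →ₗ[R] koszulTerm R f M (i - 1)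
  | 0 => 0
  | (p + 1) => koszulDiff R f M p

/-- The `i`-th homology `H_i(K•(f₁,…,f_r) ⊗_R M)` of the Koszul complex
on `f : Fin r → R` with coefficients in `M`. -/
noncomputable def koszulHomology (R : Type) [CommRing R] {r : ℕ} (f : Fin r → R)
    (M : Type) [AddCommGroup M] [Module R M] (i : ℕ) : Type :=
  LinearMap.ker (koszulDiff' R f M i) ⧸
    Submodule.comap (LinearMap.ker (koszulDiff' R f M i)).subtype
      (LinearMap.range (koszulDiff R f M i))

noncomputable instance (R : Type) [CommRing R] {r : ℕ} (f : Fin r → R)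
    (M : Type) [AddCommGroup M] [Module R M] (i : ℕ) :
    AddCommGroup (koszulHomology R f M i) := by
  unfold koszulHomology; infer_instance

noncomputable instance (R : Type) [CommRing R] {r : ℕ} (f : Fin r → R)
    (M : Type) [AddCommGroup M] [Module R M] (i : ℕ) :
    Module R (koszulHomology R f M i) := by
  unfold koszulHomology; infer_instance

/-- The depth of `I` on `M`: the supremum of lengths of `M`-regular sequences in `I`. -/
noncomputable def idealDepth (R : Type) [CommRing R] (I : Ideal R)
    (M : Type) [AddCommGroup M] [Module R M] : ℕ :=
  sSup {n : ℕ | ∃ rs : List R, rs.length = n ∧ (∀ x ∈ rs, x ∈ I) ∧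
    RingTheory.Sequence.IsRegular M rs}

namespace Stmt15Aux

variable (R : Type) [CommRing R] (M : Type) [AddCommGroup M] [Module R M]

/-- Extension of a Koszul cochain to all finsets (by `0`). -/
noncomputable def ext {r p : ℕ} {f : Fin r → R} (z : koszulTerm R f M p)
    (t : Finset (Fin r)) : M :=
  if h : t.card = p then z ⟨t, h⟩ else 0

lemma ext_apply {r p : ℕ} {f : Fin r → R} (z : koszulTerm R f M p) (t : Finset (Fin r))
    (h : t.card = p) : ext R M z t = z ⟨t, h⟩ := dif_pos h

lemma koszulDiff_apply {r p : ℕ} (f : Fin r → R) (x : koszulTerm R f M (p+1))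
    (s : {s : Finset (Fin r) // s.card = p}) :
    koszulDiff R f M p x s
      = ∑ i ∈ s.1ᶜ, (((-1 : R) ^ (s.1.filter (fun j => j < i)).card) * f i) •
          ext R M x (insert i s.1) := by
  rw [koszulDiff, LinearMap.pi_apply, LinearMap.sum_apply]
  rw [← Finset.sum_attach s.1ᶜ
    (fun i => (((-1 : R) ^ (s.1.filter (fun j => j < i)).card) * f i) •
      ext R M x (insert i s.1))]
  refine Finset.sum_congr rfl fun i _ => ?_
  rw [LinearMap.smul_apply, LinearMap.proj_apply, ext_apply]

lemma d1_apply {r : ℕ} (f : Fin r → R) (x : koszulTerm R f M 1)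
    (s : {s : Finset (Fin r) // s.card = 0}) :
    koszulDiff R f M 0 x s = ∑ i, f i • ext R M x {i} := by
  obtain ⟨s, hs⟩ := s
  obtain rfl := Finset.card_eq_zero.mp hs
  rw [koszulDiff_apply]
  simp

lemma d2_apply {r : ℕ} (f : Fin r → R) (z : koszulTerm R f M 2) (i : Fin r)
    (h : ({i} : Finset (Fin r)).card = 1) :
    koszulDiff R f M 1 z ⟨{i}, h⟩
      = ∑ k, (((-1 : R) ^ (({i} : Finset (Fin r)).filter (fun j => j < k)).card) * f k) •
          ext R M z (insert k {i}) := by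
  rw [koszulDiff_apply]
  rw [← Finset.sum_compl_add_sum ({i} : Finset (Fin r))
    (fun k => (((-1 : R) ^ (({i} : Finset (Fin r)).filter (fun j => j < k)).card) * f k) •
          ext R M z (insert k {i}))]
  have h1 : ext R M z ({i} : Finset (Fin r)) = 0 := dif_neg (by simp)
  simp [Finset.insert_eq_self.mpr (Finset.mem_singleton_self i), h1]

noncomputable def lcomb {r : ℕ} (f : Fin r → R) : (Fin r → M) →ₗ[R] M :=
  ∑ i, f i • (LinearMap.proj i : (Fin r → M) →ₗ[R] M)

lemma lcomb_apply {r : ℕ} (f : Fin r → R) (y : Fin r → M) :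
    lcomb R M f y = ∑ i, f i • y i := by
  simp [lcomb]

lemma smul_top_eq_range {r : ℕ} (f : Fin r → R) :
    (Ideal.ofList (List.ofFn f) • ⊤ : Submodule R M) = LinearMap.range (lcomb R M f) := by
  apply le_antisymm
  · refine Submodule.smul_le.2 fun c hc m _ => ?_
    rw [Ideal.ofList] at hc
    induction hc using Submodule.span_induction with
    | mem x hx =>
      obtain ⟨i, rfl⟩ := List.mem_ofFn.mp hx
      exact ⟨Pi.single i m, by simp [lcomb_apply, Pi.single_apply,
        Finset.sum_ite_eq', smul_ite]⟩
    | zero => simp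
    | add a b _ _ ha hb => rw [add_smul]; exact add_mem ha hb
    | smul a b _ hb => rw [smul_eq_mul, mul_smul]; exact Submodule.smul_mem _ a hb
  · rintro _ ⟨y, rfl⟩
    rw [lcomb_apply]
    refine sum_mem fun i _ => Submodule.smul_mem_smul ?_ trivial
    exact Ideal.subset_span (by simp [List.mem_ofFn])

lemma h1_exact {r : ℕ} (f : Fin r → R) (hs : Subsingleton (koszulHomology R f M 1))
    (x : koszulTerm R f M 1) (hx : koszulDiff R f M 0 x = 0) :
    ∃ z, koszulDiff R f M 1 z = x := by
  have hx' : x ∈ LinearMap.ker (koszulDiff' R f M 1) := LinearMap.mem_ker.mpr hx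
  have hP : Submodule.comap (LinearMap.ker (koszulDiff' R f M 1)).subtype
      (LinearMap.range (koszulDiff R f M 1)) = ⊤ :=
    Submodule.Quotient.subsingleton_iff.mp hs
  have h2 : (⟨x, hx'⟩ : LinearMap.ker (koszulDiff' R f M 1)) ∈
      Submodule.comap (LinearMap.ker (koszulDiff' R f M 1)).subtype
        (LinearMap.range (koszulDiff R f M 1)) := hP.symm ▸ Submodule.mem_top
  obtain ⟨z, hz⟩ := Submodule.mem_comap.mp h2
  exact ⟨z, hz⟩

lemma top_ne {r : ℕ} (f : Fin r → R) (h0 : Nontrivial (koszulHomology R f M 0)) :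
    (⊤ : Submodule R M) ≠ Ideal.ofList (List.ofFn f) • ⊤ := by
  intro h
  have hrange : ∀ m : M, m ∈ LinearMap.range (lcomb R M f) := fun m => by
    rw [← smul_top_eq_range, ← h]; trivial
  have hcomap : Submodule.comap (LinearMap.ker (koszulDiff' R f M 0)).subtype
      (LinearMap.range (koszulDiff R f M 0)) = ⊤ := by
    rw [eq_top_iff]
    rintro ⟨x, hxk⟩ -
    rw [Submodule.mem_comap]
    obtain ⟨y, hy⟩ := hrange (x ⟨∅, rfl⟩)
    refine LinearMap.mem_range.mpr ⟨fun s => ∑ i ∈ s.1, y i, ?_⟩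
    funext s
    have he : ∀ i : Fin r,
        ext R M (f := f) (fun s : {s : Finset (Fin r) // s.card = 1} => ∑ i ∈ s.1, y i) {i} = y i :=
      fun i => by rw [ext_apply R M _ _ (Finset.card_singleton i)]; simp
    have hstep : koszulDiff R f M 0 (fun s => ∑ i ∈ s.1, y i) s = ∑ i, f i • y i := by
      rw [d1_apply]
      exact Finset.sum_congr rfl fun i _ => by rw [he]
    rw [hstep, show (∑ i, f i • y i) = lcomb R M f y from (lcomb_apply R M f y).symm, hy]
    obtain ⟨s, hs⟩ := s
    obtain rfl := Finset.card_eq_zero.mp hs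
    rfl
  exact not_subsingleton (koszulHomology R f M 0)
    (Submodule.Quotient.subsingleton_iff.mpr hcomap)

lemma claimB {r : ℕ} (f : Fin (r+1) → R) (hs : Subsingleton (koszulHomology R f M 1))
    {m : M}
    (hm : f (Fin.last r) • m ∈
      (Ideal.ofList (List.ofFn fun i => f i.castSucc) • ⊤ : Submodule R M)) :
    m ∈ (Ideal.ofList (List.ofFn fun i => f i.castSucc) • ⊤ : Submodule R M) := by
  rw [smul_top_eq_range] at hm ⊢
  obtain ⟨y, hy⟩ := hm
  rw [lcomb_apply] at hy
  set c : Fin (r+1) → M := Fin.lastCases m (fun j => -(y j)) with hc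
  set x : koszulTerm R f M 1 := fun s => ∑ i ∈ s.1, c i with hxdef
  have hx : koszulDiff R f M 0 x = 0 := by
    funext s
    rw [d1_apply]
    have he : ∀ i : Fin (r+1), ext R M x {i} = c i := fun i => by
      rw [ext_apply R M x _ (Finset.card_singleton i)]; simp [hxdef]
    simp only [he]
    show _ = (0 : M)
    rw [Fin.sum_univ_castSucc]
    simp only [hc, Fin.lastCases_castSucc, Fin.lastCases_last, smul_neg,
      Finset.sum_neg_distrib]
    rw [hy]
    exact neg_add_cancel _
  obtain ⟨z, hz⟩ := h1_exact R M f hs x hx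
  have h2 := congrFun hz ⟨{Fin.last r}, Finset.card_singleton _⟩
  rw [d2_apply] at h2
  have hxlast : x ⟨{Fin.last r}, Finset.card_singleton _⟩ = m := by
    simp [hxdef, hc]
  rw [hxlast, Fin.sum_univ_castSucc] at h2
  have hlast0 : ext R M z (insert (Fin.last r) ({Fin.last r} : Finset (Fin (r+1)))) = 0 := by
    rw [Finset.insert_eq_self.mpr (Finset.mem_singleton_self _)]
    exact dif_neg (by simp)
  rw [hlast0, smul_zero, add_zero] at h2
  have hsign : ∀ j : Fin r,
      (({Fin.last r} : Finset (Fin (r+1))).filter (fun jj => jj < Fin.castSucc j)).card = 0 := by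
    intro j
    rw [Finset.filter_singleton, if_neg (not_lt_of_gt (Fin.castSucc_lt_last j))]
    rfl
  simp only [hsign, pow_zero, one_mul] at h2
  refine ⟨fun j => ext R M z (insert (Fin.castSucc j) ({Fin.last r} : Finset (Fin (r+1)))), ?_⟩
  rw [lcomb_apply]
  exact h2

/-- `Fin.castSucc` as an embedding. -/
def cemb (r : ℕ) : Fin r ↪ Fin (r+1) := ⟨Fin.castSucc, Fin.castSucc_injective r⟩

@[simp] lemma cemb_apply (r : ℕ) (k : Fin r) : cemb r k = k.castSucc := rfl

lemma claimA_core {r : ℕ} (f : Fin (r+1) → R) (hs : Subsingleton (koszulHomology R f M 1))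
    (x : koszulTerm R (fun i => f i.castSucc) M 1)
    (hx : koszulDiff R (fun i => f i.castSucc) M 0 x = 0) :
    ∃ w, koszulDiff R (fun i => f i.castSucc) M 0 w = 0 ∧
      x - f (Fin.last r) • w ∈
        LinearMap.range (koszulDiff R (fun i => f i.castSucc) M 1) := by
  -- lift `x` to a cycle for `f`
  set c : Fin (r+1) → M := Fin.lastCases 0 (fun j => x ⟨{j}, Finset.card_singleton j⟩) with hc
  set xh : koszulTerm R f M 1 := fun s => ∑ i ∈ s.1, c i with hxh
  have hxhc : koszulDiff R f M 0 xh = 0 := by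
    funext s
    rw [d1_apply]
    have he : ∀ i : Fin (r+1), ext R M xh {i} = c i := fun i => by
      rw [ext_apply R M xh _ (Finset.card_singleton i)]; simp [hxh]
    simp only [he]
    show _ = (0 : M)
    rw [Fin.sum_univ_castSucc]
    simp only [hc, Fin.lastCases_castSucc, Fin.lastCases_last, smul_zero, add_zero]
    have h0 := congrFun hx ⟨∅, rfl⟩
    rw [d1_apply] at h0
    have he2 : ∀ j : Fin r, ext R M x {j} = x ⟨{j}, Finset.card_singleton j⟩ := fun j =>
      ext_apply R M x _ (Finset.card_singleton j)
    simp only [he2] at h0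
    exact h0
  obtain ⟨z, hz⟩ := h1_exact R M f hs xh hxhc
  set z₀ : koszulTerm R (fun i => f i.castSucc) M 2 :=
    fun t => z ⟨t.1.map (cemb r), by rw [Finset.card_map, t.2]⟩ with hz₀
  set w : koszulTerm R (fun i => f i.castSucc) M 1 :=
    fun s => ext R M z (insert (Fin.last r) (s.1.map (cemb r))) with hw
  have hext : ∀ t : Finset (Fin r), ext R M z₀ t = ext R M z (t.map (cemb r)) := by
    intro t
    by_cases h : t.card = 2
    · rw [ext_apply R M z₀ t h, ext_apply R M z _ (by rw [Finset.card_map]; exact h)]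
    · rw [ext, dif_neg h, ext, dif_neg (by rw [Finset.card_map]; exact h)]
  -- `w` is a cycle
  have hwc : koszulDiff R (fun i => f i.castSucc) M 0 w = 0 := by
    funext s
    rw [d1_apply]
    have he : ∀ j : Fin r, ext R M w {j}
        = ext R M z (insert (Fin.last r) ({Fin.castSucc j} : Finset (Fin (r+1)))) := fun j => by
      rw [ext_apply R M w _ (Finset.card_singleton j)]
      simp only [hw, Finset.map_singleton, cemb_apply]
    simp only [he]
    show _ = (0 : M)
    have h2 := congrFun hz ⟨{Fin.last r}, Finset.card_singleton _⟩
    rw [d2_apply] at h2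
    have hrhs : xh ⟨{Fin.last r}, Finset.card_singleton _⟩ = 0 := by
      simp [hxh, hc]
    rw [hrhs, Fin.sum_univ_castSucc] at h2
    have hlast0 : ext R M z (insert (Fin.last r) ({Fin.last r} : Finset (Fin (r+1)))) = 0 := by
      rw [Finset.insert_eq_self.mpr (Finset.mem_singleton_self _)]
      exact dif_neg (by simp)
    rw [hlast0, smul_zero, add_zero] at h2
    have hsign : ∀ j : Fin r,
        (({Fin.last r} : Finset (Fin (r+1))).filter (fun jj => jj < Fin.castSucc j)).card = 0 := by
      intro j
      rw [Finset.filter_singleton, if_neg (not_lt_of_gt (Fin.castSucc_lt_last j))]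
      rfl
    simp only [hsign, pow_zero, one_mul] at h2
    have hins : ∀ j : Fin r,
        (insert (Fin.castSucc j) ({Fin.last r} : Finset (Fin (r+1))))
          = insert (Fin.last r) ({Fin.castSucc j} : Finset (Fin (r+1))) := fun j => by
      rw [Finset.pair_comm]
    simp only [hins] at h2
    exact h2
  refine ⟨-w, by rw [map_neg, hwc, neg_zero], ⟨z₀, ?_⟩⟩
  rw [smul_neg, sub_neg_eq_add]
  funext s
  obtain ⟨s, hscard⟩ := s
  obtain ⟨i, rfl⟩ := Finset.card_eq_one.mp hscard
  rw [d2_apply]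
  have h2 := congrFun hz ⟨{Fin.castSucc i}, Finset.card_singleton _⟩
  rw [d2_apply, Fin.sum_univ_castSucc] at h2
  -- right-hand side of h2
  have hrhs : xh ⟨{Fin.castSucc i}, Finset.card_singleton _⟩
      = x ⟨{i}, Finset.card_singleton i⟩ := by
    simp [hxh, hc]
  rw [hrhs] at h2
  -- the `last` summand of h2
  have hsignlast :
      (({Fin.castSucc i} : Finset (Fin (r+1))).filter (fun jj => jj < Fin.last r)).card = 1 := by
    rw [Finset.filter_singleton, if_pos (Fin.castSucc_lt_last i)]
    rfl
  have hwlast : ext R M z (insert (Fin.last r) ({Fin.castSucc i} : Finset (Fin (r+1))))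
      = w ⟨{i}, hscard⟩ := by
    simp only [hw, Finset.map_singleton, cemb_apply]
  rw [hsignlast] at h2
  have hinslast : (insert (Fin.last r) ({Fin.castSucc i} : Finset (Fin (r+1))))
      = insert (Fin.castSucc i) ({Fin.last r} : Finset (Fin (r+1))) := by
    rw [Finset.pair_comm]
  -- the castSucc summands of h2
  have hterm : ∀ k : Fin r,
      (((-1 : R) ^ (({Fin.castSucc i} : Finset (Fin (r+1))).filter
          (fun jj => jj < Fin.castSucc k)).card) * f (Fin.castSucc k)) •
        ext R M z (insert (Fin.castSucc k) ({Fin.castSucc i} : Finset (Fin (r+1))))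
      = (((-1 : R) ^ (({i} : Finset (Fin r)).filter (fun j => j < k)).card)
            * (fun i => f i.castSucc) k) •
        ext R M z₀ (insert k ({i} : Finset (Fin r))) := by
    intro k
    have e1 : (({Fin.castSucc i} : Finset (Fin (r+1))).filter
        (fun jj => jj < Fin.castSucc k)).card
        = (({i} : Finset (Fin r)).filter (fun j => j < k)).card := by
      rw [Finset.filter_singleton, Finset.filter_singleton]
      by_cases h : i < k
      · rw [if_pos (Fin.castSucc_lt_castSucc_iff.mpr h), if_pos h]
        simp
      · rw [if_neg (fun hcc => h (Fin.castSucc_lt_castSucc_iff.mp hcc)), if_neg h]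
        simp
    have e2 : ext R M z (insert (Fin.castSucc k) ({Fin.castSucc i} : Finset (Fin (r+1))))
        = ext R M z₀ (insert k ({i} : Finset (Fin r))) := by
      rw [hext]
      simp only [Finset.map_insert, Finset.map_singleton, cemb_apply]
    rw [e1, e2]
  simp only [hterm] at h2
  -- conclude
  have hfin : (((-1 : R) ^ (1:ℕ)) * f (Fin.last r)) •
      ext R M z (insert (Fin.last r) ({Fin.castSucc i} : Finset (Fin (r+1))))
      = -(f (Fin.last r) • w ⟨{i}, hscard⟩) := by
    rw [hwlast, pow_one, neg_one_mul, neg_smul]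
  rw [hfin] at h2
  show _ = x ⟨{i}, hscard⟩ + f (Fin.last r) • w ⟨{i}, hscard⟩
  rw [← h2]
  abel

lemma claimA [IsNoetherianRing R] [IsLocalRing R] [Module.Finite R M]
    {r : ℕ} (f : Fin (r+1) → R) (hf : f (Fin.last r) ∈ IsLocalRing.maximalIdeal R)
    (hs : Subsingleton (koszulHomology R f M 1)) :
    Subsingleton (koszulHomology R (fun i => f i.castSucc) M 1) := by
  set N := LinearMap.ker (koszulDiff' R (fun i => f i.castSucc) M 1) with hN
  set P := Submodule.comap N.subtype
    (LinearMap.range (koszulDiff R (fun i => f i.castSucc) M 1)) with hP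
  suffices h : P = ⊤ by
    exact Submodule.Quotient.subsingleton_iff.mpr h
  haveI : IsNoetherian R (koszulTerm R (fun i => f i.castSucc) M 1) :=
    isNoetherian_of_isNoetherianRing_of_finite R _
  have hle : (⊤ : Submodule R (N ⧸ P)) ≤ Ideal.span {f (Fin.last r)} • ⊤ := by
    rintro q -
    obtain ⟨⟨x, hxk⟩, rfl⟩ := Submodule.Quotient.mk_surjective P q
    have hx : koszulDiff R (fun i => f i.castSucc) M 0 x = 0 := hxk
    obtain ⟨w, hw, hrange⟩ := claimA_core R M f hs x hx
    have hwk : w ∈ N := LinearMap.mem_ker.mpr hw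
    have heq : Submodule.Quotient.mk (p := P) ⟨x, hxk⟩
        = f (Fin.last r) • Submodule.Quotient.mk (p := P) ⟨w, hwk⟩ := by
      rw [← Submodule.Quotient.mk_smul, Submodule.Quotient.eq]
      exact hrange
    rw [heq]
    exact Submodule.smul_mem_smul (Ideal.mem_span_singleton_self _) trivial
  have hjac : Ideal.span {f (Fin.last r)} ≤ Ideal.jacobson ⊥ := by
    rw [IsLocalRing.jacobson_eq_maximalIdeal ⊥ bot_ne_top]
    exact (Ideal.span_le).mpr (Set.singleton_subset_iff.mpr hf)
  have hbot : (⊤ : Submodule R (N ⧸ P)) = ⊥ :=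
    Submodule.eq_bot_of_le_smul_of_le_jacobson_bot _ ⊤ (IsNoetherian.noetherian ⊤) hle hjac
  have hss : Subsingleton (N ⧸ P) :=
    subsingleton_of_forall_eq 0 fun q => (Submodule.mem_bot R).mp (hbot ▸ Submodule.mem_top)
  exact Submodule.Quotient.subsingleton_iff.mp hss

lemma key [IsNoetherianRing R] [IsLocalRing R] [Module.Finite R M] :
    ∀ (r : ℕ) (f : Fin r → R), (∀ j, f j ∈ IsLocalRing.maximalIdeal R) →
      Subsingleton (koszulHomology R f M 1) →
      RingTheory.Sequence.IsWeaklyRegular M (List.ofFn f) := by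
  intro r
  induction r with
  | zero =>
    intro f _ _
    rw [List.ofFn_zero]
    exact RingTheory.Sequence.IsWeaklyRegular.nil R M
  | succ n ih =>
    intro f hf h1
    have hg := claimA R M f (hf _) h1
    have hwg := ih (fun i => f i.castSucc) (fun j => hf _) hg
    rw [List.ofFn_succ', List.concat_eq_append,
      RingTheory.Sequence.isWeaklyRegular_append_iff]
    refine ⟨hwg, ?_⟩
    rw [RingTheory.Sequence.isWeaklyRegular_singleton_iff]
    intro u v huv
    replace huv : f (Fin.last n) • u = f (Fin.last n) • v := huv
    obtain ⟨mu, rfl⟩ := Submodule.Quotient.mk_surjective _ u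
    obtain ⟨mv, rfl⟩ := Submodule.Quotient.mk_surjective _ v
    rw [← Submodule.Quotient.mk_smul, ← Submodule.Quotient.mk_smul,
      Submodule.Quotient.eq] at huv
    rw [← smul_sub] at huv
    rw [Submodule.Quotient.eq]
    exact claimB R M f h1 huv

end Stmt15Aux

/-- Koszul acyclicity criterion (converse of depth sensitivity): let `R` be a Noetherian
local ring, `M` a finitely generated `R`-module, and `f₁, …, f_r` elements of the maximal
ideal.  If `H_i(K•(f₁,…,f_r) ⊗_R M) = 0` for all `i > 0` and
`H_0 = M/(f₁,…,f_r)M ≠ 0`, then `f₁, …, f_r` is an `M`-regular sequence. -/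
theorem stmt15 (R : Type) [CommRing R] [IsNoetherianRing R] [IsLocalRing R]
    (M : Type) [AddCommGroup M] [Module R M] [Module.Finite R M]
    {r : ℕ} (f : Fin r → R) (hf : ∀ j, f j ∈ IsLocalRing.maximalIdeal R)
    (hacyc : ∀ i : ℕ, 0 < i → Subsingleton (koszulHomology R f M i))
    (h0 : Nontrivial (koszulHomology R f M 0)) :
    RingTheory.Sequence.IsRegular M (List.ofFn f) := by
  exact ⟨Stmt15Aux.key R M r f hf (hacyc 1 one_pos), Stmt15Aux.top_ne R M f h0⟩
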